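/- Let a divisible homogeneous good be split between two agents with entitlements b_1 = 1/3 and b_2 = 2/3, both having the valuation v(x) = √x on [0,1]. Then: (i) the unique weighted envy-free allocation, i.e. the unique (x_1, x_2) with x_1, x_2 ≥ 0, x_1 + x_2 = 1, v(x_1) ≥ (1/2)·v(x_2), and v(x_2) ≥ 2·v(x_1), is (1/5, 4/5); and (ii) this allocation has strictly lower weighted Nash social welfare than the proportional allocation: (1/5)^{1/6} · (4/5)^{1/3} < (1/3)^{1/6} · (2/3)^{1/3}. -/

import Mathlib

/-!
For `v = √·` the two weighted envy-freeness constraints are `√x₂ ≤ 2√x₁` and `2√x₁ ≤ √x₂`,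
so they force `√x₂ = 2√x₁`, i.e. `x₂ = 4x₁`. Both welfare values have the form
`a^(1/6) b^(1/3) = (a b²)^(1/6)`, so the comparison reduces to `16/125 < 4/27`.
-/

namespace Real

theorem sqrt_eq_two_mul_sqrt_iff {x y : ℝ} (hx : 0 ≤ x) (hy : 0 ≤ y) :
    √y = 2 * √x ↔ y = 4 * x := by
  rw [sqrt_eq_iff_eq_sq hy (by positivity), mul_pow, sq_sqrt hx]
  norm_num

theorem rpow_mul_rpow_two_mul {a b : ℝ} (ha : 0 ≤ a) (hb : 0 ≤ b) (p : ℝ) :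
    a ^ p * b ^ (2 * p) = (a * b ^ 2) ^ p := by
  rw [mul_rpow ha (by positivity), rpow_mul hb, rpow_two]

end Real

open Real

theorem stmt_18 :
    -- (1/5, 4/5) is weighted envy-free
    ((1/2) * Real.sqrt (4/5) ≤ Real.sqrt (1/5) ∧
      2 * Real.sqrt (1/5) ≤ Real.sqrt (4/5)) ∧
    -- and it is the unique weighted envy-free allocation
    (∀ x1 x2 : ℝ, 0 ≤ x1 → 0 ≤ x2 → x1 + x2 = 1 →
      (1/2) * Real.sqrt x2 ≤ Real.sqrt x1 →
      2 * Real.sqrt x1 ≤ Real.sqrt x2 →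
      x1 = 1/5 ∧ x2 = 4/5) ∧
    -- its WNSW is strictly lower than that of the proportional allocation
    ((1/5 : ℝ) ^ ((1:ℝ)/6) * (4/5 : ℝ) ^ ((1:ℝ)/3)
      < (1/3 : ℝ) ^ ((1:ℝ)/6) * (2/3 : ℝ) ^ ((1:ℝ)/3)) := by
  have hsqrt : √(4/5) = 2 * √(1/5) :=
    (sqrt_eq_two_mul_sqrt_iff (by norm_num) (by norm_num)).2 (by norm_num)
  refine ⟨⟨by linarith, hsqrt.ge⟩, ?_, ?_⟩
  · intro x1 x2 hx1 hx2 hsum henvy1 henvy2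
    have hx21 : x2 = 4 * x1 :=
      (sqrt_eq_two_mul_sqrt_iff hx1 hx2).1 (le_antisymm (by linarith) henvy2)
    constructor <;> linarith
  · rw [show (1 : ℝ) / 3 = 2 * (1 / 6) by norm_num,
      rpow_mul_rpow_two_mul (by norm_num) (by norm_num),
      rpow_mul_rpow_two_mul (by norm_num) (by norm_num)]
    exact rpow_lt_rpow (by norm_num) (by norm_num) (by norm_num)
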